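/- arXiv:2603.18193 — 4 statements merged into one kernel-verified Lean document; each statement's English description precedes it below -/
import Mathlib

section
/- The alternating sum of the determinants Δ_j vanishes: ∑_{j=2k}^{4k} (−1)^j Δ_j = 0. -/
/-- The `2k × 2k` matrix `M_j`, whose rows are indexed by `r ∈ {2k,…,4k} \ {j}` in
increasing order and whose columns are indexed by `i ∈ {1,…,2k−1}` in increasing order
followed by `j` as the last column, with entries `Γ_{r,i}`; its determinant is `Δ_j`. -/
def Mjmat (k : ℕ) (Γ : ℕ → ℕ → ℤ) (j : ℕ) : Matrix (Fin (2 * k)) (Fin (2 * k)) ℤ :=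
  Matrix.of fun t c =>
    Γ (if 2 * k + (t : ℕ) < j then 2 * k + (t : ℕ) else 2 * k + (t : ℕ) + 1)
      (if (c : ℕ) < 2 * k - 1 then (c : ℕ) + 1 else j)

private lemma neg_one_pow_congr_mod (a b : ℕ) (h : a % 2 = b % 2) : ((-1 : ℤ)) ^ a = (-1) ^ b := by
  conv_lhs => rw [← Nat.div_add_mod a 2]
  conv_rhs => rw [← Nat.div_add_mod b 2]
  rw [pow_add, pow_add, pow_mul, pow_mul]
  norm_num [h]

/-- The minor matrix with rows `[m+1, 2m+2] \ {a,b}` (increasing) and columns `1,…,m`. -/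
private def Nm (m : ℕ) (Γ : ℕ → ℕ → ℤ) (a b : ℕ) : Matrix (Fin m) (Fin m) ℤ :=
  Matrix.of fun s c =>
    Γ (if m + 1 + (s : ℕ) < min a b then m + 1 + (s : ℕ)
       else if m + 2 + (s : ℕ) < max a b then m + 2 + (s : ℕ) else m + 3 + (s : ℕ))
      ((c : ℕ) + 1)

private lemma Nm_comm (m : ℕ) (Γ : ℕ → ℕ → ℤ) (a b : ℕ) : Nm m Γ a b = Nm m Γ b a := by
  unfold Nm; rw [min_comm, max_comm]

/-- `Mjmat` reindexed with `m = 2k - 1`. -/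
private def Mm (m : ℕ) (Γ : ℕ → ℕ → ℤ) (j : ℕ) : Matrix (Fin (m + 1)) (Fin (m + 1)) ℤ :=
  Matrix.of fun t c =>
    Γ (if m + 1 + (t : ℕ) < j then m + 1 + (t : ℕ) else m + 2 + (t : ℕ))
      (if (c : ℕ) < m then (c : ℕ) + 1 else j)

private lemma val_succAbove {m : ℕ} (t : Fin (m + 1)) (s : Fin m) :
    ((t.succAbove s : Fin (m + 1)) : ℕ) = if (s : ℕ) < (t : ℕ) then (s : ℕ) else (s : ℕ) + 1 := by
  rcases lt_or_ge ((s : ℕ)) ((t : ℕ)) with h | h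
  · rw [Fin.succAbove_of_castSucc_lt _ _ (by simpa [Fin.lt_def] using h), if_pos h,
      Fin.coe_castSucc]
  · rw [Fin.succAbove_of_le_castSucc _ _ (by simpa [Fin.le_def] using h),
      if_neg (not_lt.2 h), Fin.val_succ]

private lemma sign_eq (m j t : ℕ) :
    (-1 : ℤ) ^ j * (-1) ^ (t + m)
      = (if (if m + 1 + t < j then m + 1 + t else m + 2 + t) < j then (-1 : ℤ) else 1)
        * (-1) ^ (j + (if m + 1 + t < j then m + 1 + t else m + 2 + t)) := by
  by_cases h1 : m + 1 + t < j
  · simp only [if_pos h1]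
    rw [← pow_add, neg_one_pow_congr_mod (j + (t + m)) (j + (m + 1 + t) + 1) (by omega), pow_succ]
    ring
  · simp only [if_neg h1]
    rw [if_neg (by omega : ¬ m + 2 + t < j), ← pow_add,
      neg_one_pow_congr_mod (j + (t + m)) (j + (m + 2 + t)) (by omega)]
    ring

private lemma main_lemma (m : ℕ) (Γ : ℕ → ℕ → ℤ)
    (hs : ∀ a b, m + 1 ≤ a → a ≤ 2 * m + 2 → m + 1 ≤ b → b ≤ 2 * m + 2 → Γ a b = Γ b a) :
    ∑ j ∈ Finset.Icc (m + 1) (2 * m + 2), (-1 : ℤ) ^ j * (Mm m Γ j).det = 0 := by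
  classical
  set I := Finset.Icc (m + 1) (2 * m + 2) with hI
  set F : ℕ → ℕ → ℤ := fun j r =>
    (if r < j then (-1 : ℤ) else 1) * (-1) ^ (j + r) * Γ r j * (Nm m Γ j r).det with hF
  have step1 : ∀ j ∈ I, (-1 : ℤ) ^ j * (Mm m Γ j).det = ∑ r ∈ I.erase j, F j r := by
    intro j hj
    rw [hI, Finset.mem_Icc] at hj
    rw [Matrix.det_succ_column (Mm m Γ j) (Fin.last m), Finset.mul_sum]
    refine Finset.sum_bij
      (fun (t : Fin (m + 1)) _ => if m + 1 + (t : ℕ) < j then m + 1 + (t : ℕ) else m + 2 + (t : ℕ))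
      ?_ ?_ ?_ ?_
    · intro t _
      simp only [hI, Finset.mem_erase, Finset.mem_Icc]
      have := t.isLt
      split_ifs <;> omega
    · intro t1 _ t2 _ h
      have := t1.isLt; have := t2.isLt
      apply Fin.ext
      split_ifs at h <;> omega
    · intro r hr
      rw [hI, Finset.mem_erase, Finset.mem_Icc] at hr
      refine ⟨⟨if r < j then r - (m + 1) else r - (m + 2), by split_ifs <;> omega⟩,
        Finset.mem_univ _, ?_⟩
      simp only
      split_ifs <;> omega
    · intro t _
      have hminor : (Mm m Γ j).submatrix t.succAbove (Fin.last m).succAbove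
          = Nm m Γ j (if m + 1 + (t : ℕ) < j then m + 1 + (t : ℕ) else m + 2 + (t : ℕ)) := by
        ext s c
        have hsm := s.isLt
        have htm := t.isLt
        simp only [Matrix.submatrix_apply, Mm, Nm, Matrix.of_apply, Fin.succAbove_last,
          Fin.coe_castSucc]
        rw [if_pos c.isLt]
        congr 1
        rw [val_succAbove]
        split_ifs <;> omega
      have hentry : Mm m Γ j t (Fin.last m)
          = Γ (if m + 1 + (t : ℕ) < j then m + 1 + (t : ℕ) else m + 2 + (t : ℕ)) j := by
        simp only [Mm, Matrix.of_apply, Fin.val_last]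
        rw [if_neg (lt_irrefl m)]
      rw [hminor, hentry, hF]
      simp only [Fin.val_last]
      rw [← mul_assoc, ← mul_assoc, sign_eq m j (t : ℕ)]
  rw [Finset.sum_congr rfl step1]
  have hrw : ∀ j ∈ I, ∑ r ∈ I.erase j, F j r = ∑ r ∈ I, if r ≠ j then F j r else 0 := by
    intro j _
    rw [← Finset.sum_filter, Finset.filter_ne']
  rw [Finset.sum_congr rfl hrw, ← Finset.sum_product']
  refine Finset.sum_involution (fun p _ => (p.2, p.1)) ?_ ?_ ?_ ?_
  · intro p hp
    rw [Finset.mem_product, hI, Finset.mem_Icc, Finset.mem_Icc] at hp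
    by_cases hne : p.2 = p.1
    · simp [hne]
    · rw [if_pos hne, if_pos (Ne.symm hne)]
      simp only [hF]
      rw [Nm_comm m Γ p.2 p.1, hs p.1 p.2 hp.1.1 hp.1.2 hp.2.1 hp.2.2,
        Nat.add_comm p.2 p.1]
      rcases lt_or_gt_of_ne hne with h | h
      · rw [if_pos h, if_neg (by omega)]; ring
      · rw [if_neg (by omega), if_pos h]; ring
  · intro p _ h0 heq
    apply h0
    have : p.2 = p.1 := by
      have := congrArg Prod.fst heq
      simpa using this
    simp [this]
  · intro p hp
    rw [Finset.mem_product] at hp ⊢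
    exact ⟨hp.2, hp.1⟩
  · intro p _
    rfl

/-- The alternating sum of the determinants `Δ_j` vanishes:
`∑_{j=2k}^{4k} (−1)^j Δ_j = 0`. -/
theorem alternating_sum_det_eq_zero (k : ℕ) (hk : 1 ≤ k) (Γ : ℕ → ℕ → ℤ)
    (hsymm : ∀ a b, a ∈ Finset.Icc 1 (4 * k) → b ∈ Finset.Icc 1 (4 * k) → Γ a b = Γ b a) :
    ∑ j ∈ Finset.Icc (2 * k) (4 * k), (-1 : ℤ) ^ j * (Mjmat k Γ j).det = 0 := by
  obtain ⟨k', rfl⟩ : ∃ k', k = k' + 1 := ⟨k - 1, by omega⟩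
  have h1 : Finset.Icc (2 * (k' + 1)) (4 * (k' + 1))
      = Finset.Icc ((2 * k' + 1) + 1) (2 * (2 * k' + 1) + 2) := by
    congr 1 <;> ring
  have h2 : ∀ j, Mjmat (k' + 1) Γ j = Mm (2 * k' + 1) Γ j := by
    intro j
    ext t c
    simp only [Mjmat, Mm, Matrix.of_apply]
    congr 1 <;> (split_ifs <;> omega)
  calc ∑ j ∈ Finset.Icc (2 * (k' + 1)) (4 * (k' + 1)),
        (-1 : ℤ) ^ j * (Mjmat (k' + 1) Γ j).det
      = ∑ j ∈ Finset.Icc ((2 * k' + 1) + 1) (2 * (2 * k' + 1) + 2),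
        (-1 : ℤ) ^ j * (Mm (2 * k' + 1) Γ j).det := by
        rw [h1]; exact Finset.sum_congr rfl fun j _ => by rw [h2 j]
    _ = 0 := main_lemma (2 * k' + 1) Γ (fun a b ha1 ha2 hb1 hb2 =>
        hsymm a b (by rw [Finset.mem_Icc]; omega) (by rw [Finset.mem_Icc]; omega))
end

section
/- If d ≥ 2 is an even integer, then there exists an index j with 2k ≤ j ≤ 4k such that the image of Δ_j in ℤ_d is not a unit of ℤ_d. -/
/-- The `t`-th row index of `M_j`: elements of `{2k,…,4k} \ {j}` in increasing order. -/
def rhoAux (k j t : ℕ) : ℕ := if 2 * k + t < j then 2 * k + t else 2 * k + t + 1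

/-- The `s`-th element of `{2k,…,4k} \ {a,b}` in increasing order (for `a ≠ b`). -/
def skip2Aux (k a b s : ℕ) : ℕ :=
  if 2 * k + s < min a b then 2 * k + s
  else if 2 * k + s + 1 < max a b then 2 * k + s + 1
  else 2 * k + s + 2

/-- The minor of the column part of `M_j`, with rows `{2k,…,4k} \ {a,b}` and columns
`1,…,2k-1`, over `ZMod 2`. -/
def DmatAux (k : ℕ) (Γ : ℕ → ℕ → ℤ) (a b : ℕ) :
    Matrix (Fin (2 * k - 1)) (Fin (2 * k - 1)) (ZMod 2) :=
  Matrix.of fun s c => ((Γ (skip2Aux k a b (s : ℕ)) ((c : ℕ) + 1) : ℤ) : ZMod 2)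

lemma skip2Aux_comm (k a b : ℕ) : skip2Aux k a b = skip2Aux k b a := by
  funext s; unfold skip2Aux; rw [min_comm, max_comm]

lemma DmatAux_comm (k : ℕ) (Γ : ℕ → ℕ → ℤ) (a b : ℕ) : DmatAux k Γ a b = DmatAux k Γ b a := by
  unfold DmatAux; rw [skip2Aux_comm]

lemma skip_skip (k j t s : ℕ) (hj1 : 2 * k ≤ j) (hj2 : j ≤ 4 * k)
    (ht : t < 2 * k) (hs : s < 2 * k - 1) :
    rhoAux k j (if s < t then s else s + 1) = skip2Aux k j (rhoAux k j t) s := by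
  unfold rhoAux skip2Aux
  split_ifs <;> omega

lemma det_expand (k : ℕ) (hk : 1 ≤ k) (Γ : ℕ → ℕ → ℤ) (j : ℕ)
    (hj1 : 2 * k ≤ j) (hj2 : j ≤ 4 * k) :
    (((Mjmat k Γ j).det : ℤ) : ZMod 2)
      = ∑ t : Fin (2 * k),
          ((Γ (rhoAux k j (t : ℕ)) j : ℤ) : ZMod 2) * (DmatAux k Γ j (rhoAux k j (t : ℕ))).det := by
  have hm : 2 * k = (2 * k - 1) + 1 := by omega
  have h1 : (((Mjmat k Γ j).det : ℤ) : ZMod 2)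
      = ((Mjmat k Γ j).map (Int.cast : ℤ → ZMod 2)).det := by
    rw [show ((Mjmat k Γ j).map (Int.cast : ℤ → ZMod 2))
        = (Int.castRingHom (ZMod 2)).mapMatrix (Mjmat k Γ j) from rfl,
      ← RingHom.map_det]
    rfl
  rw [h1]
  set A := ((Mjmat k Γ j).map (Int.cast : ℤ → ZMod 2)) with hA
  rw [← Matrix.det_reindex_self (finCongr hm) A]
  set B := (Matrix.reindex (finCongr hm) (finCongr hm)) A with hB
  rw [Matrix.det_succ_column B (Fin.last _)]
  refine Fintype.sum_equiv (finCongr hm).symm _ _ (fun i => ?_)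
  -- i : Fin (2*k-1+1)
  have hneg : (-1 : ZMod 2) = 1 := by decide
  rw [hneg, one_pow, one_mul]
  have hrow : ∀ t : Fin ((2*k-1)+1), ∀ c : Fin ((2*k-1)+1),
      B t c = ((Γ (if 2*k + (t:ℕ) < j then 2*k + (t:ℕ) else 2*k + (t:ℕ) + 1)
        (if (c:ℕ) < 2*k-1 then (c:ℕ)+1 else j) : ℤ) : ZMod 2) := by
    intro t c
    simp [hB, hA, Mjmat, Matrix.reindex_apply]
  congr 1
  · rw [hrow]
    simp [rhoAux, Fin.last]
  · have : (B.submatrix i.succAbove (Fin.last (2*k-1)).succAbove)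
        = DmatAux k Γ j (rhoAux k j ((i : ℕ))) := by
      funext s c
      rw [Matrix.submatrix_apply, hrow]
      rw [Fin.succAbove_last]
      have hcoe : ((i.succAbove s : Fin ((2*k-1)+1)) : ℕ)
          = if (s:ℕ) < (i:ℕ) then (s:ℕ) else (s:ℕ)+1 := by
        rcases lt_or_ge (s.castSucc) i with h | h
        · rw [Fin.succAbove_of_castSucc_lt _ _ h]
          have : (s:ℕ) < (i:ℕ) := h
          simp [this]
        · rw [Fin.succAbove_of_le_castSucc _ _ h]
          have : ¬ ((s:ℕ) < (i:ℕ)) := by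
            have := (Fin.le_def.mp h); simp at this ⊢; omega
          simp [this]
      have hc : ((c.castSucc : Fin ((2*k-1)+1)) : ℕ) = (c:ℕ) := rfl
      have hclt : (c:ℕ) < 2*k - 1 := c.isLt
      rw [hc, hcoe]
      simp only [DmatAux, Matrix.of_apply, if_pos hclt]
      have := skip_skip k j (i:ℕ) (s:ℕ) hj1 hj2 (by omega) (by omega)
      unfold rhoAux at this ⊢
      rw [← this]
    rw [this]
    simp

lemma det_expand' (k : ℕ) (hk : 1 ≤ k) (Γ : ℕ → ℕ → ℤ) (j : ℕ)
    (hj1 : 2 * k ≤ j) (hj2 : j ≤ 4 * k) :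
    (((Mjmat k Γ j).det : ℤ) : ZMod 2)
      = ∑ r ∈ (Finset.Icc (2 * k) (4 * k)).erase j,
          ((Γ r j : ℤ) : ZMod 2) * (DmatAux k Γ j r).det := by
  rw [det_expand k hk Γ j hj1 hj2]
  refine Finset.sum_bij (fun t _ => rhoAux k j (t : ℕ)) ?_ ?_ ?_ ?_
  · intro t _
    have ht : (t : ℕ) < 2 * k := t.isLt
    simp only [Finset.mem_erase, Finset.mem_Icc, rhoAux]
    split_ifs <;> omega
  · intro t1 _ t2 _ h
    have h1 : (t1 : ℕ) < 2 * k := t1.isLt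
    have h2 : (t2 : ℕ) < 2 * k := t2.isLt
    apply Fin.ext
    simp only [rhoAux] at h
    split_ifs at h <;> omega
  · intro r hr
    simp only [Finset.mem_erase, Finset.mem_Icc] at hr
    refine ⟨⟨if r < j then r - 2 * k else r - 2 * k - 1, by split_ifs <;> omega⟩,
      Finset.mem_univ _, ?_⟩
    simp only [rhoAux]
    split_ifs <;> omega
  · intro t _; rfl

/-- If `d ≥ 2` is even, there exists `j` with `2k ≤ j ≤ 4k` such that the image of
`Δ_j` in `ℤ_d` is not a unit. -/
theorem exists_det_not_unit (k : ℕ) (hk : 1 ≤ k) (Γ : ℕ → ℕ → ℤ)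
    (hsymm : ∀ a b, a ∈ Finset.Icc 1 (4 * k) → b ∈ Finset.Icc 1 (4 * k) → Γ a b = Γ b a)
    (d : ℕ) (hd : 2 ≤ d) (hdeven : Even d) :
    ∃ j ∈ Finset.Icc (2 * k) (4 * k), ¬ IsUnit (((Mjmat k Γ j).det : ZMod d)) := by
  by_contra hcon
  push_neg at hcon
  have h2 : (2 : ℕ) ∣ d := hdeven.two_dvd
  -- every det is 1 mod 2
  have key : ∀ j ∈ Finset.Icc (2 * k) (4 * k), (((Mjmat k Γ j).det : ℤ) : ZMod 2) = 1 := by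
    intro j hj
    have hu : IsUnit ((ZMod.castHom h2 (ZMod 2)) (((Mjmat k Γ j).det : ℤ) : ZMod d)) :=
      (hcon j hj).map _
    rw [map_intCast] at hu
    have htriv : ∀ y : ZMod 2, IsUnit y → y = 1 := by decide
    exact htriv _ hu
  -- the sum of the dets mod 2 is zero
  have hsum0 : ∑ j ∈ Finset.Icc (2 * k) (4 * k), (((Mjmat k Γ j).det : ℤ) : ZMod 2) = 0 := by
    have hstep : ∀ j ∈ Finset.Icc (2 * k) (4 * k),
        (((Mjmat k Γ j).det : ℤ) : ZMod 2)
          = ∑ r ∈ Finset.Icc (2 * k) (4 * k),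
              (if r ≠ j then ((Γ r j : ℤ) : ZMod 2) * (DmatAux k Γ j r).det else 0) := by
      intro j hj
      rw [Finset.mem_Icc] at hj
      rw [det_expand' k hk Γ j hj.1 hj.2, ← Finset.sum_filter, Finset.filter_ne']
    rw [Finset.sum_congr rfl hstep, ← Finset.sum_product']
    refine Finset.sum_involution (fun p _ => p.swap) ?_ ?_ ?_ ?_
    · intro p hp
      simp only [Finset.mem_product, Finset.mem_Icc] at hp
      have hsymm' : ∀ a b : ℕ, 2 * k ≤ a → a ≤ 4 * k → 2 * k ≤ b → b ≤ 4 * k →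
          ((Γ a b : ℤ) : ZMod 2) * (DmatAux k Γ b a).det
            = ((Γ b a : ℤ) : ZMod 2) * (DmatAux k Γ a b).det := by
        intro a b ha1 ha2 hb1 hb2
        rw [hsymm a b (Finset.mem_Icc.mpr ⟨by omega, ha2⟩) (Finset.mem_Icc.mpr ⟨by omega, hb2⟩),
          DmatAux_comm]
      rcases eq_or_ne p.1 p.2 with h | h
      · simp [Prod.swap, h]
      · simp only [Prod.swap, Ne, h, h.symm, not_false_iff, if_true, Prod.fst, Prod.snd]
        rw [hsymm' p.1 p.2 hp.1.1 hp.1.2 hp.2.1 hp.2.2]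
        exact CharTwo.add_self_eq_zero _
    · intro p hp hne
      intro hfix
      apply hne
      have : p.1 = p.2 := by
        have h' := congrArg Prod.fst hfix
        simp only [Prod.fst_swap] at h'
        exact h'.symm
      simp [this]
    · intro p hp
      simp only [Finset.mem_product] at hp ⊢
      exact ⟨hp.2, hp.1⟩
    · intro p _; rfl
  rw [Finset.sum_congr rfl key, Finset.sum_const, Nat.card_Icc] at hsum0
  have hcard : 4 * k + 1 - 2 * k = 2 * k + 1 := by omega
  rw [hcard] at hsum0
  have : ((2 * k + 1 : ℕ) : ZMod 2) = 1 := by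
    push_cast
    rw [show ((2 : ZMod 2)) = 0 from by decide]
    ring
  rw [nsmul_eq_mul, this, mul_one] at hsum0
  exact one_ne_zero hsum0
end

section
/- Let k ≥ 1, N = 4k, and let d ≥ 2 be an even integer. Let Γ be an N×N symmetric matrix over ℤ_d with zero diagonal. Then there exist an index j with 2k ≤ j ≤ 4k and a nonzero vector α ∈ (ℤ_d)^N supported on {1,…,2k−1} ∪ {j} (i.e., α_r = 0 for all r ∉ {1,…,2k−1} ∪ {j}) such that for every r ∈ {2k,…,4k}\{j} one has ∑_{i=1}^{N} Γ_{r,i} α_i = 0 in ℤ_d. Equivalently, there is a set R ⊆ {1,…,N} of size 2k and a nonzero α vanishing on R with (Γ·α)_r = 0 for all r ∈ R. -/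
lemma zmod2_aux (x y : ZMod 2) (h : ¬ (x = 0 ∧ y = 0)) : x + y + x * y = 1 := by
  revert h; revert y; revert x; decide

lemma zmod2_val_cast (x : ZMod 2) : ((x.val : ℕ) : ZMod 2) = x := ZMod.natCast_zmod_val x

lemma zmod2_ne_zero (x : ZMod 2) (h : x ≠ 0) : x = 1 := by revert h; revert x; decide

lemma lift_aux (d : ℕ) (hd : 2 ≤ d) (h2 : (2:ℕ) ∣ d) (z : ZMod d)
    (hz : (ZMod.castHom h2 (ZMod 2)) z = 0) : ((d/2 : ℕ) : ZMod d) * z = 0 := by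
  haveI : NeZero d := ⟨by omega⟩
  have hzz : ((z.val : ℕ) : ZMod d) = z := ZMod.natCast_zmod_val z
  rw [← hzz] at hz
  rw [map_natCast (ZMod.castHom h2 (ZMod 2)) z.val] at hz
  obtain ⟨m, hm⟩ := (ZMod.natCast_eq_zero_iff _ _).mp hz
  rw [← hzz, ← Nat.cast_mul, hm]
  have : d / 2 * (2 * m) = d * m := by
    rw [← mul_assoc, Nat.div_mul_cancel h2]
  rw [this, Nat.cast_mul, ZMod.natCast_self, zero_mul]

/-- Let `k ≥ 1`, `N = 4k`, and let `d ≥ 2` be even. Let `Γ` be an `N × N` symmetric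
matrix over `ℤ_d` (rows and columns labeled `1,…,N`) with zero diagonal. Then there exist
`j` with `2k ≤ j ≤ 4k` and a nonzero vector `α` supported on `{1,…,2k−1} ∪ {j}` such that
for every `r ∈ {2k,…,4k} \ {j}` one has `∑_{i=1}^{N} Γ_{r,i} α_i = 0` in `ℤ_d`. -/
theorem exists_nontrivial_solution (k d : ℕ) (hk : 1 ≤ k) (hd : 2 ≤ d) (hdeven : Even d)
    (Γ : ℕ → ℕ → ZMod d)
    (hsymm : ∀ a b, a ∈ Finset.Icc 1 (4 * k) → b ∈ Finset.Icc 1 (4 * k) → Γ a b = Γ b a)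
    (hdiag : ∀ a, a ∈ Finset.Icc 1 (4 * k) → Γ a a = 0) :
    ∃ j ∈ Finset.Icc (2 * k) (4 * k), ∃ α : ℕ → ZMod d,
      α ≠ 0 ∧
      (∀ r, r ∉ Finset.Icc 1 (2 * k - 1) ∪ {j} → α r = 0) ∧
      ∀ r ∈ (Finset.Icc (2 * k) (4 * k)).erase j,
        ∑ i ∈ Finset.Icc 1 (4 * k), Γ r i * α i = 0 := by
  classical
  have h2d : (2:ℕ) ∣ d := hdeven.two_dvd
  haveI : NeZero d := ⟨by omega⟩
  haveI : Fact (Nat.Prime 2) := ⟨Nat.prime_two⟩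
  set π := ZMod.castHom h2d (ZMod 2) with hπ
  set G : ℕ → ℕ → ZMod 2 := fun a b => π (Γ a b) with hG
  set R0 : Finset ℕ := Finset.Icc (2*k) (4*k) with hR0
  set C0 : Finset ℕ := Finset.Icc 1 (2*k-1) with hC0
  have hR0card : R0.card = 2*k+1 := by rw [hR0, Nat.card_Icc]; omega
  have hC0card : C0.card = 2*k-1 := by rw [hC0, Nat.card_Icc]; omega
  have hR0sub : ∀ x ∈ R0, x ∈ Finset.Icc 1 (4*k) := by
    intro x hx; rw [hR0, Finset.mem_Icc] at hx; rw [Finset.mem_Icc]; omega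
  have hC0sub : ∀ x ∈ C0, x ∈ Finset.Icc 1 (4*k) := by
    intro x hx; rw [hC0, Finset.mem_Icc] at hx; rw [Finset.mem_Icc]; omega
  have hGsymm : ∀ a b, a ∈ Finset.Icc 1 (4*k) → b ∈ Finset.Icc 1 (4*k) → G a b = G b a := by
    intro a b ha hb; rw [hG]; simp only; rw [hsymm a b ha hb]
  have hGdiag : ∀ a ∈ Finset.Icc 1 (4*k), G a a = 0 := by
    intro a ha; rw [hG]; simp only; rw [hdiag a ha]; exact map_zero π
  -- Step 1: pigeonhole to find c
  set Φ : (R0 → ZMod 2) → ((C0 → ZMod 2) × ZMod 2) := fun c =>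
    (fun i => ∑ r : R0, c r * G ↑r ↑i,
     (∑ r : R0, c r) + ∑ j : R0, ∑ r : R0, c r * G ↑r ↑j) with hΦ
  have hcardlt : Fintype.card ((C0 → ZMod 2) × ZMod 2) < Fintype.card (R0 → ZMod 2) := by
    rw [Fintype.card_prod, Fintype.card_fun, Fintype.card_fun, Fintype.card_coe,
      Fintype.card_coe, hR0card, hC0card]
    have : Fintype.card (ZMod 2) = 2 := by decide
    rw [this]
    have h1 : 2 ^ (2*k-1) * 2 = 2 ^ (2*k) := by
      rw [← pow_succ]; congr 1; omega
    rw [h1]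
    exact Nat.pow_lt_pow_right (by norm_num) (by omega)
  obtain ⟨c1, c2, hne, heq⟩ := Fintype.exists_ne_map_eq_of_card_lt Φ hcardlt
  set c : R0 → ZMod 2 := c1 - c2 with hc
  have hc0 : c ≠ 0 := sub_ne_zero.mpr hne
  have hA : ∀ i : C0, ∑ r : R0, c r * G ↑r ↑i = 0 := by
    intro i
    have h1 := congrFun (congrArg Prod.fst heq) i
    simp only [hΦ] at h1
    simp only [hc, Pi.sub_apply, sub_mul, Finset.sum_sub_distrib]
    linear_combination h1
  set Sc : R0 → ZMod 2 := fun j => ∑ r : R0, c r * G ↑r ↑j with hSc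
  have hB : (∑ r : R0, c r) + ∑ j : R0, Sc j = 0 := by
    have h2 := congrArg Prod.snd heq
    simp only [hΦ] at h2
    simp only [hSc, hc, Pi.sub_apply, sub_mul, Finset.sum_sub_distrib]
    linear_combination h2
  have hC : ∑ j : R0, c j * Sc j = 0 := by
    have hrw : ∑ j : R0, c j * Sc j
        = ∑ p ∈ (Finset.univ ×ˢ Finset.univ : Finset (R0 × R0)),
            c p.1 * (c p.2 * G ↑p.2 ↑p.1) := by
      rw [Finset.sum_product]
      simp only [hSc, Finset.mul_sum]
    rw [hrw]
    apply Finset.sum_involution (fun p _ => Prod.swap p)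
    · intro p hp
      have hs : G ↑p.2 ↑p.1 = G ↑p.1 ↑p.2 := hGsymm _ _ (hR0sub _ p.2.2) (hR0sub _ p.1.2)
      simp only [Prod.fst_swap, Prod.snd_swap]
      rw [hs]
      have e : c p.2 * (c p.1 * G ↑p.1 ↑p.2) = c p.1 * (c p.2 * G ↑p.1 ↑p.2) := by ring
      rw [e, CharTwo.add_self_eq_zero]
    · intro p hp hfne
      intro hsw
      apply hfne
      have h12 : p.2 = p.1 := congrArg Prod.fst hsw
      rw [h12, hGdiag _ (hR0sub _ p.1.2)]
      ring
    · intro p hp; exact Finset.mem_product.mpr ⟨Finset.mem_univ _, Finset.mem_univ _⟩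
    · intro p hp; rfl
  -- Step 3: find good j
  have hj : ∃ j : R0, c j = 0 ∧ Sc j = 0 := by
    by_contra hcon
    push_neg at hcon
    have hterm : ∀ j : R0, c j + Sc j + c j * Sc j = 1 := by
      intro j
      apply zmod2_aux
      rintro ⟨h1, h2⟩
      exact hcon j h1 h2
    have hsum : ∑ j : R0, (c j + Sc j + c j * Sc j) = ((2*k+1 : ℕ) : ZMod 2) := by
      rw [Finset.sum_congr rfl (fun j _ => hterm j)]
      rw [Finset.sum_const, Finset.card_univ, Fintype.card_coe, hR0card]
      simp
    rw [Finset.sum_add_distrib, Finset.sum_add_distrib, hB, hC, zero_add] at hsum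
    have : ((2*k+1 : ℕ) : ZMod 2) = 1 := by
      push_cast
      rw [show ((2:ZMod 2)) = 0 from rfl]
      ring
    rw [this] at hsum
    exact one_ne_zero hsum.symm
  obtain ⟨jh, hcj, hScj⟩ := hj
  set j : ℕ := ↑jh with hjdef
  have hjmem : j ∈ R0 := jh.2
  have hjIcc : 2*k ≤ j ∧ j ≤ 4*k := by rw [hR0, Finset.mem_Icc] at hjmem; exact hjmem
  set Rj : Finset ℕ := R0.erase j with hRj
  set Cs : Finset ℕ := C0 ∪ {j} with hCsdef
  have hjC : j ∉ C0 := by rw [hC0, Finset.mem_Icc]; omega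
  have hRjcard : Rj.card = 2*k := by
    rw [hRj, Finset.card_erase_of_mem hjmem, hR0card]
    omega
  have hCscard : Cs.card = 2*k := by
    rw [hCsdef, Finset.card_union_of_disjoint (Finset.disjoint_singleton_right.mpr hjC),
      hC0card, Finset.card_singleton]
    omega
  have hCssub : ∀ x ∈ Cs, x ∈ Finset.Icc 1 (4*k) := by
    intro x hx
    rw [hCsdef, Finset.mem_union, Finset.mem_singleton] at hx
    rcases hx with hx | hx
    · exact hC0sub x hx
    · rw [Finset.mem_Icc]; omega
  set eR := Rj.equivFinOfCardEq hRjcard with heR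
  set eC := Cs.equivFinOfCardEq hCscard with heC
  set cext : ℕ → ZMod 2 := fun r => if h : r ∈ R0 then c ⟨r, h⟩ else 0 with hcext
  have hcextj : cext j = 0 := by
    rw [hcext]; simp only [dif_pos hjmem]
    have : (⟨j, hjmem⟩ : R0) = jh := Subtype.ext rfl
    rw [this]; exact hcj
  set M : Matrix (Fin (2*k)) (Fin (2*k)) (ZMod 2) :=
    Matrix.of (fun a b => G ↑(eR.symm a) ↑(eC.symm b)) with hM
  set w : Fin (2*k) → ZMod 2 := fun a => cext ↑(eR.symm a) with hw
  have hsum_R0 : ∀ i : ℕ, ∑ r ∈ R0, cext r * G r i = ∑ r : R0, c r * G ↑r i := by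
    intro i
    rw [← Finset.sum_coe_sort]
    apply Finset.sum_congr rfl
    intro r _
    rw [hcext]
    simp only [dif_pos r.2]
  have hwM : Matrix.vecMul w M = 0 := by
    funext b
    have h0 : Matrix.vecMul w M b = ∑ a, w a * M a b := by
      simp [Matrix.vecMul, dotProduct]
    rw [h0]
    have h1 : ∑ a, w a * M a b = ∑ x : Rj, cext ↑x * G ↑x ↑(eC.symm b) :=
      Equiv.sum_comp eR.symm (fun x => cext ↑x * G ↑x ↑(eC.symm b))
    rw [h1]
    have h2 : ∑ x : Rj, cext ↑x * G ↑x ↑(eC.symm b)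
        = ∑ r ∈ Rj, cext r * G r ↑(eC.symm b) :=
      Finset.sum_coe_sort Rj (fun r => cext r * G r ↑(eC.symm b))
    rw [h2]
    have h3 : ∑ r ∈ Rj, cext r * G r ↑(eC.symm b) = ∑ r ∈ R0, cext r * G r ↑(eC.symm b) := by
      rw [hRj]
      exact Finset.sum_erase _ (by rw [hcextj, zero_mul])
    rw [h3, hsum_R0]
    have hbmem : (↑(eC.symm b) : ℕ) ∈ C0 ∪ {j} := (eC.symm b).2
    rcases Finset.mem_union.mp hbmem with hb | hb
    · exact hA ⟨_, hb⟩
    · have hbj : (↑(eC.symm b) : ℕ) = j := Finset.mem_singleton.mp hb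
      rw [hbj]
      exact hScj
  have hw0 : w ≠ 0 := by
    obtain ⟨r0, hr0⟩ : ∃ r0 : R0, c r0 ≠ 0 := by
      by_contra h; push_neg at h; exact hc0 (funext h)
    have hr0j : (↑r0 : ℕ) ≠ j := by
      intro h
      apply hr0
      have : r0 = jh := Subtype.ext h
      rw [this]; exact hcj
    have hr0Rj : (↑r0 : ℕ) ∈ Rj := by rw [hRj]; exact Finset.mem_erase.mpr ⟨hr0j, r0.2⟩
    intro hw'
    apply hr0
    have h1 := congrFun hw' (eR ⟨↑r0, hr0Rj⟩)
    rw [hw] at h1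
    simp only [Equiv.symm_apply_apply, Pi.zero_apply] at h1
    rw [hcext] at h1
    simp only [dif_pos r0.2] at h1
    rwa [Subtype.coe_eta] at h1
  have hdet : M.det = 0 := Matrix.exists_vecMul_eq_zero_iff.mp ⟨w, hw0, hwM⟩
  obtain ⟨β, hβ0, hβ⟩ := Matrix.exists_mulVec_eq_zero_iff.mpr hdet
  -- Step 5: assemble solution
  set βext : ℕ → ZMod 2 := fun i => if h : i ∈ Cs then β (eC ⟨i, h⟩) else 0 with hβext
  set α : ℕ → ZMod d := fun i => ((d/2 : ℕ) : ZMod d) * (((βext i).val : ℕ) : ZMod d) with hα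
  have hd2 : ((d/2 : ℕ) : ZMod d) ≠ 0 := by
    intro h
    have hdvd := (ZMod.natCast_eq_zero_iff _ _).mp h
    have h1 := Nat.le_of_dvd (by omega) hdvd
    omega
  refine ⟨j, hjmem, α, ?_, ?_, ?_⟩
  · -- α ≠ 0
    obtain ⟨b0, hb0⟩ : ∃ b0, β b0 ≠ 0 := Function.ne_iff.mp hβ0
    have hb1 : β b0 = 1 := zmod2_ne_zero _ hb0
    set i0 : Cs := eC.symm b0 with hi0
    intro hα0
    have h1 := congrFun hα0 ↑i0
    rw [hα] at h1
    simp only [Pi.zero_apply] at h1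
    have h2 : βext ↑i0 = 1 := by
      rw [hβext]
      simp only [dif_pos i0.2, Subtype.coe_eta, hi0, Equiv.apply_symm_apply, hb1, dif_pos (eC.symm b0).2]
    rw [h2, show ((1 : ZMod 2)).val = 1 from rfl] at h1
    simp only [Nat.cast_one, mul_one] at h1
    exact hd2 h1
  · -- support
    intro r hr
    have hrCs : r ∉ Cs := hr
    rw [hα]
    simp only
    rw [hβext]
    simp only [dif_neg hrCs]
    rw [show ((0:ZMod 2)).val = 0 from rfl]
    simp
  · -- main condition
    intro r hr
    have hrRj : r ∈ Rj := hr
    set z : ZMod d := ∑ i ∈ Finset.Icc 1 (4*k), Γ r i * (((βext i).val : ℕ) : ZMod d) with hz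
    have hgoal : ∑ i ∈ Finset.Icc 1 (4*k), Γ r i * α i = ((d/2:ℕ) : ZMod d) * z := by
      rw [hz, Finset.mul_sum]
      apply Finset.sum_congr rfl
      intro i _
      rw [hα]
      ring
    rw [hgoal]
    apply lift_aux d hd h2d
    rw [hz, map_sum]
    have hterm : ∀ i ∈ Finset.Icc 1 (4*k),
        π (Γ r i * (((βext i).val : ℕ) : ZMod d)) = G r i * βext i := by
      intro i _
      rw [map_mul, map_natCast, zmod2_val_cast]
    rw [Finset.sum_congr rfl hterm]
    have hsub : ∑ i ∈ Finset.Icc 1 (4*k), G r i * βext i = ∑ i ∈ Cs, G r i * βext i := by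
      symm
      apply Finset.sum_subset (fun x hx => hCssub x hx)
      intro x hx hxn
      rw [hβext]
      simp only [dif_neg hxn, mul_zero]
    rw [hsub]
    have h1 : ∑ i ∈ Cs, G r i * βext i = ∑ i : Cs, G r ↑i * βext ↑i :=
      (Finset.sum_coe_sort Cs (fun i => G r i * βext i)).symm
    rw [h1]
    have h3 : ∑ i : Cs, G r ↑i * βext ↑i
        = ∑ b : Fin (2*k), G r ↑(eC.symm b) * βext ↑(eC.symm b) :=
      (Equiv.sum_comp eC.symm (fun i : Cs => G r ↑i * βext ↑i)).symm
    set a : Fin (2*k) := eR ⟨r, hrRj⟩ with ha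
    have h4 : ∀ b : Fin (2*k), G r ↑(eC.symm b) * βext ↑(eC.symm b) = M a b * β b := by
      intro b
      have e1 : βext ↑(eC.symm b) = β b := by
        rw [hβext]
        simp only [dif_pos (eC.symm b).2, Subtype.coe_eta, Equiv.apply_symm_apply]
      have e2 : M a b = G r ↑(eC.symm b) := by
        rw [hM, ha]
        simp only [Matrix.of_apply, Equiv.symm_apply_apply]
      rw [e1, e2]
    calc ∑ i : Cs, G r ↑i * βext ↑i
        = ∑ b, G r ↑(eC.symm b) * βext ↑(eC.symm b) := h3
      _ = ∑ b, M a b * β b := Finset.sum_congr rfl (fun b _ => h4 b)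
      _ = M.mulVec β a := by simp [Matrix.mulVec, dotProduct]
      _ = 0 := by rw [hβ]; rfl
end

section
/- (Lemma 1) The graph state ψ_G is absolutely maximally entangled if and only if for every nonzero exponent vector α : {1,…,N} → {0,…,d−1} and every subset Q ⊆ {1,…,N} with |Q| = ⌈N/2⌉, the partial trace over Q of the stabilizer element ∏_{i=1}^{N} g_i^{α_i} is the zero operator. -/
/-- The primitive `d`-th root of unity `ω = exp(2πi/d)`. -/
noncomputable def omg (d : ℕ) : ℂ := Complex.exp (2 * Real.pi * Complex.I / d)

/-- The `d × d` cyclic shift matrix `X = ∑_j |j+1 mod d⟩⟨j|`. -/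
def Xmat (d : ℕ) : Matrix (Fin d) (Fin d) ℂ :=
  Matrix.of fun l m => if (l : ℕ) = ((m : ℕ) + 1) % d then 1 else 0

/-- The `d × d` clock matrix `Z = diag(1, ω, ω², …, ω^{d−1})`. -/
noncomputable def Zmat (d : ℕ) : Matrix (Fin d) (Fin d) ℂ :=
  Matrix.diagonal fun j => omg d ^ (j : ℕ)

/-- The `N`-qudit operator acting as the `d × d` matrix `M` on the `i`-th tensor factor
and as the identity on all other factors. -/
noncomputable def siteOp (d N : ℕ) (M : Matrix (Fin d) (Fin d) ℂ) (i : Fin N) :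
    Matrix (Fin N → Fin d) (Fin N → Fin d) ℂ :=
  Matrix.of fun f f' =>
    M (f i) (f' i) * ∏ l ∈ Finset.univ.erase i, (if f l = f' l then (1 : ℂ) else 0)

/-- The graph-state stabilizer generator `g_i = X_i ∏_j Z_j^{Γ_{ij}}`. -/
noncomputable def gGen (d N : ℕ) (Γ : Matrix (Fin N) (Fin N) ℕ) (i : Fin N) :
    Matrix (Fin N → Fin d) (Fin N → Fin d) ℂ :=
  siteOp d N (Xmat d) i *
    ((List.finRange N).map fun j => siteOp d N (Zmat d ^ Γ i j) j).prod

/-- The stabilizer element `∏_{i=1}^{N} g_i^{α_i}` for an exponent vector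
`α : {1,…,N} → {0,…,d−1}`. -/
noncomputable def stabElem (d N : ℕ) (Γ : Matrix (Fin N) (Fin N) ℕ) (α : Fin N → Fin d) :
    Matrix (Fin N → Fin d) (Fin N → Fin d) ℂ :=
  ((List.finRange N).map fun i => gGen d N Γ i ^ (α i : ℕ)).prod

/-- The graph state, with components `ψ_G(f) = d^{−N/2} ω^{∑_{i<j} Γ_{ij} f(i) f(j)}`. -/
noncomputable def psiG (d N : ℕ) (Γ : Matrix (Fin N) (Fin N) ℕ) : (Fin N → Fin d) → ℂ :=
  fun f => (Real.sqrt ((d : ℝ) ^ N) : ℂ)⁻¹ *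
    omg d ^ ∑ p ∈ Finset.univ.filter (fun p : Fin N × Fin N => p.1 < p.2),
      Γ p.1 p.2 * (f p.1 : ℕ) * (f p.2 : ℕ)

/-- The rank-one projector `|ψ⟩⟨ψ|` with entries `ψ(f) · conj(ψ(f'))`. -/
noncomputable def outer (d N : ℕ) (ψ : (Fin N → Fin d) → ℂ) :
    Matrix (Fin N → Fin d) (Fin N → Fin d) ℂ :=
  Matrix.of fun f f' => ψ f * (starRingEnd ℂ) (ψ f')

/-- The function on `{1,…,N}` equal to `f` on `Qᶜ` and to `h` on `Q`. -/
def glue {d N : ℕ} (Q : Finset (Fin N)) (f : {x : Fin N // x ∉ Q} → Fin d)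
    (h : {x : Fin N // x ∈ Q} → Fin d) : Fin N → Fin d :=
  fun x => if hx : x ∈ Q then h ⟨x, hx⟩ else f ⟨x, hx⟩

/-- The partial trace over the qudits in `Q` of an `N`-qudit operator `M`:
`(Tr_Q M)(f, f') = ∑_{h : Q → {0,…,d−1}} M(f ⊔ h, f' ⊔ h)`. -/
noncomputable def ptrace {d N : ℕ} (Q : Finset (Fin N))
    (M : Matrix (Fin N → Fin d) (Fin N → Fin d) ℂ) :
    Matrix ({x : Fin N // x ∉ Q} → Fin d) ({x : Fin N // x ∉ Q} → Fin d) ℂ :=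
  Matrix.of fun f f' => ∑ h : {x : Fin N // x ∈ Q} → Fin d, M (glue Q f h) (glue Q f' h)

lemma omg_pow_d {d : ℕ} (hd : 0 < d) : omg d ^ d = 1 := by
  rw [omg, ← Complex.exp_nat_mul]
  have hne : (d:ℂ) ≠ 0 := Nat.cast_ne_zero.mpr hd.ne'
  rw [show (d:ℂ) * (2 * Real.pi * Complex.I / d) = 2 * Real.pi * Complex.I by field_simp]
  simpa [mul_comm] using Complex.exp_two_pi_mul_I

lemma omg_pow_mod {d : ℕ} (hd : 0 < d) (m : ℕ) : omg d ^ m = omg d ^ (m % d) := by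
  conv_lhs => rw [← Nat.div_add_mod m d]
  rw [pow_add, pow_mul, omg_pow_d hd, one_pow, one_mul]

lemma omg_pow_congr {d : ℕ} (hd : 0 < d) {m n : ℕ} (h : (m : ZMod d) = n) :
    omg d ^ m = omg d ^ n := by
  rw [omg_pow_mod hd m, omg_pow_mod hd n]
  congr 1
  rwa [ZMod.natCast_eq_natCast_iff] at h

lemma omg_conj_self {d : ℕ} : (starRingEnd ℂ) (omg d) * omg d = 1 := by
  rw [omg, ← Complex.exp_conj, ← Complex.exp_add]
  have : (starRingEnd ℂ) (2 * Real.pi * Complex.I / d) = -(2 * Real.pi * Complex.I / d) := by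
    simp [map_div₀, Complex.conj_I, map_ofNat]
    ring
  rw [this, neg_add_cancel, Complex.exp_zero]

lemma omg_conj {d : ℕ} (m : ℕ) :
    (starRingEnd ℂ) (omg d ^ m) * omg d ^ m = 1 := by
  rw [map_pow, ← mul_pow, omg_conj_self, one_pow]


/-- cast Fin d to ZMod d via val -/
def fz {d : ℕ} (a : Fin d) : ZMod d := (a.val : ZMod d)

lemma fz_add {d : ℕ} (a b : Fin d) : fz (a + b) = fz a + fz b := by
  unfold fz
  rw [Fin.add_def]
  simp only []
  rw [ZMod.natCast_mod, Nat.cast_add]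

lemma fz_sub {d : ℕ} (a b : Fin d) : fz (a - b) = fz a - fz b := by
  unfold fz
  rw [Fin.sub_def]
  simp only []
  rw [ZMod.natCast_mod, Nat.cast_add, Nat.cast_sub b.isLt.le]
  simp
  ring

open Fin.NatCast in
lemma fz_natCast {d : ℕ} [NeZero d] (n : ℕ) : fz ((n : Fin d)) = (n : ZMod d) := by
  unfold fz
  rw [Fin.val_natCast, ZMod.natCast_mod]

lemma fz_zero {d : ℕ} [NeZero d] : fz (0 : Fin d) = 0 := by simp [fz]

lemma fz_eq_zero_iff {d : ℕ} [NeZero d] (a : Fin d) : fz a = 0 ↔ a = 0 := by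
  unfold fz
  constructor
  · intro h
    have := (ZMod.natCast_eq_zero_iff a.val d).mp h
    have h2 := a.isLt
    exact Fin.ext (Nat.eq_zero_of_dvd_of_lt this h2)
  · intro h; simp [h]

section Mono
variable {d N : ℕ}

noncomputable def Mono (t : (Fin N → Fin d) → Fin N → Fin d) (c : (Fin N → Fin d) → ℂ) :
    Matrix (Fin N → Fin d) (Fin N → Fin d) ℂ :=
  Matrix.of fun f f' => (if f = t f' then 1 else 0) * c f'

lemma Mono_mul (t t' : (Fin N → Fin d) → Fin N → Fin d) (c c' : (Fin N → Fin d) → ℂ) :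
    Mono t c * Mono t' c' = Mono (t ∘ t') fun f => c (t' f) * c' f := by
  ext f f'
  simp only [Matrix.mul_apply, Mono, Matrix.of_apply, Function.comp]
  rw [Finset.sum_eq_single (t' f')]
  · simp only [if_pos rfl, eq_self_iff_true, if_true, mul_one]; ring
  · intro g _ hg
    rw [if_neg hg, zero_mul, mul_zero]
  · intro h; exact absurd (Finset.mem_univ _) h

lemma Mono_one : Mono (id : (Fin N → Fin d) → Fin N → Fin d) (fun _ => 1) = 1 := by
  ext f f'
  simp [Mono, Matrix.one_apply, eq_comm]

lemma siteOp_diagonal (v : Fin d → ℂ) (j : Fin N) :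
    siteOp d N (Matrix.diagonal v) j = Mono id (fun f => v (f j)) := by
  ext f f'
  simp only [siteOp, Mono, Matrix.of_apply, Matrix.diagonal_apply, id_eq]
  by_cases h : f = f'
  · subst h; simp
  · rw [if_neg h, zero_mul]
    obtain ⟨l, hl⟩ : ∃ l, f l ≠ f' l := by
      by_contra hc; push_neg at hc; exact h (funext hc)
    by_cases hlj : l = j
    · subst hlj
      rw [if_neg hl, zero_mul]
    · refine mul_eq_zero_of_right _
        (Finset.prod_eq_zero (Finset.mem_erase.mpr ⟨hlj, Finset.mem_univ l⟩) ?_)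
      exact if_neg hl

lemma Zmat_pow (m : ℕ) : Zmat d ^ m = Matrix.diagonal (fun j : Fin d => omg d ^ (m * (j : ℕ))) := by
  unfold Zmat
  rw [Matrix.diagonal_pow]
  have h : ((fun j : Fin d => omg d ^ (j : ℕ)) ^ m) = fun j : Fin d => omg d ^ (m * (j : ℕ)) := by
    funext j
    simp [← pow_mul, mul_comm]
  rw [h]

lemma prod_mono_id {β : Type*} (L : List β) (c : β → (Fin N → Fin d) → ℂ) :
    (L.map fun j => Mono id (c j)).prod = Mono id fun f => (L.map fun j => c j f).prod := by
  induction L with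
  | nil =>
    simp only [List.map_nil, List.prod_nil]
    rw [← Mono_one]
  | cons a T ih =>
    rw [List.map_cons, List.prod_cons, ih, Mono_mul]
    simp [Function.comp]

lemma Zprod (Γ : Matrix (Fin N) (Fin N) ℕ) (i : Fin N) :
    ((List.finRange N).map fun j => siteOp d N (Zmat d ^ Γ i j) j).prod =
      Mono id fun f => omg d ^ ∑ j, Γ i j * ((f j : ℕ)) := by
  have h1 : ∀ j : Fin N, siteOp d N (Zmat d ^ Γ i j) j
      = Mono id (fun f => omg d ^ (Γ i j * (f j : ℕ))) := by
    intro j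
    rw [Zmat_pow, siteOp_diagonal]
  simp only [h1]
  rw [prod_mono_id]
  have h2 : (fun f : Fin N → Fin d =>
      ((List.finRange N).map fun j => omg d ^ (Γ i j * ((f j : ℕ)))).prod)
      = fun f => omg d ^ ∑ j, Γ i j * ((f j : ℕ)) := by
    funext f
    rw [← Fin.prod_univ_def, Finset.prod_pow_eq_pow_sum]
  rw [h2]

lemma Xsite [NeZero d] (hd : 2 ≤ d) (i : Fin N) :
    siteOp d N (Xmat d) i =
      Mono (fun f l => f l + if l = i then 1 else 0) (fun _ => 1) := by
  ext f f'
  simp only [siteOp, Mono, Matrix.of_apply, Xmat, mul_one]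
  by_cases h : f = fun l => f' l + if l = i then 1 else 0
  · have hfi : f i = f' i + 1 := by rw [h]; simp
    have hfl : ∀ l, l ≠ i → f l = f' l := by
      intro l hl
      rw [h]
      simp [hl]
    have hval : (f i : ℕ) = ((f' i : ℕ) + 1) % d := by
      rw [hfi, Fin.add_def, Fin.val_one']
      rw [Nat.mod_eq_of_lt (by omega : 1 < d)]
    rw [if_pos h, if_pos hval,
      Finset.prod_eq_one fun l hl => if_pos (hfl l (Finset.mem_erase.mp hl).1), one_mul]
  · rw [if_neg h]
    obtain ⟨l, hl⟩ : ∃ l, f l ≠ f' l + if l = i then 1 else 0 := by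
      by_contra hc; push_neg at hc; exact h (funext hc)
    by_cases hlj : l = i
    · subst hlj
      have hl' : f l ≠ f' l + 1 := by simpa using hl
      have hnv : ¬ ((f l : ℕ) = ((f' l : ℕ) + 1) % d) := by
        intro hv
        apply hl'
        rw [Fin.add_def, Fin.val_one', Nat.mod_eq_of_lt (by omega : 1 < d)]
        exact Fin.ext hv
      rw [if_neg hnv, zero_mul]
    · simp only [if_neg hlj, add_zero] at hl
      refine mul_eq_zero_of_right _
        (Finset.prod_eq_zero (Finset.mem_erase.mpr ⟨hlj, Finset.mem_univ l⟩) ?_)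
      exact if_neg hl

end Mono
section Stab
variable {d N : ℕ}

lemma Mono_congr {t t' : (Fin N → Fin d) → Fin N → Fin d} {c c' : (Fin N → Fin d) → ℂ}
    (ht : ∀ f l, t f l = t' f l) (hc : ∀ f, c f = c' f) : Mono t c = Mono t' c' := by
  have h1 : t = t' := funext fun f => funext (ht f)
  have h2 : c = c' := funext hc
  rw [h1, h2]

lemma gGen_eq [NeZero d] (hd : 2 ≤ d) (Γ : Matrix (Fin N) (Fin N) ℕ) (i : Fin N) :
    gGen d N Γ i = Mono (fun f l => f l + if l = i then 1 else 0)
      (fun f => omg d ^ ∑ j, Γ i j * ((f j : ℕ))) := by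
  rw [gGen, Xsite hd i, Zprod, Mono_mul]
  exact Mono_congr (fun f l => rfl) (fun f => one_mul _)

open Fin.NatCast in
lemma gGen_pow [NeZero d] (hd : 2 ≤ d) (Γ : Matrix (Fin N) (Fin N) ℕ)
    (hdiag : ∀ i, Γ i i = 0) (i : Fin N) (a : ℕ) :
    gGen d N Γ i ^ a = Mono (fun f l => f l + if l = i then ((a : Fin d)) else 0)
      (fun f => omg d ^ (a * ∑ j, Γ i j * ((f j : ℕ)))) := by
  induction a with
  | zero =>
    rw [pow_zero, ← Mono_one]
    exact Mono_congr (fun f l => by simp) (fun f => by simp)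
  | succ a ih =>
    rw [pow_succ, ih, gGen_eq hd, Mono_mul]
    apply Mono_congr
    · intro f l
      by_cases hl : l = i
      · simp only [Function.comp_apply, if_pos hl, Nat.cast_add, Nat.cast_one]
        rw [add_assoc, add_comm (1 : Fin d)]
      · simp [Function.comp_apply, hl]
    · intro f
      have hs : ∑ j, Γ i j * (((fun l => f l + if l = i then (1 : Fin d) else 0) j : Fin d) : ℕ)
          = ∑ j, Γ i j * ((f j : ℕ)) := by
        apply Finset.sum_congr rfl
        intro j _
        by_cases hj : j = i
        · subst hj; rw [hdiag]; simp
        · simp [hj]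
      simp only [] at hs ⊢
      rw [hs, ← pow_add]
      congr 1
      ring

/-- ordered cross term for a list of indices -/
def crossL {d N : ℕ} (Γ : Matrix (Fin N) (Fin N) ℕ) (α : Fin N → Fin d) : List (Fin N) → ℕ
  | [] => 0
  | i :: T => (α i : ℕ) * ((T.map fun k => Γ i k * (α k : ℕ)).sum) + crossL Γ α T

lemma fz_val {d : ℕ} (a : Fin d) : ((a : ℕ) : ZMod d) = fz a := rfl

lemma sum_ite_mem_list {M : Type*} [AddCommMonoid M] (T : List (Fin N)) (hnd : T.Nodup)
    (g : Fin N → M) :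
    (∑ x : Fin N, if x ∈ T then g x else 0) = (T.map g).sum := by
  induction T with
  | nil => simp
  | cons k T ih =>
    have hk : k ∉ T := (List.nodup_cons.mp hnd).1
    have h2 := ih (List.nodup_cons.mp hnd).2
    rw [List.map_cons, List.sum_cons, ← h2]
    have hsplit : ∀ x : Fin N, (if x ∈ k :: T then g x else 0)
        = (if x = k then g x else 0) + (if x ∈ T then g x else 0) := by
      intro x
      by_cases hx : x = k
      · subst hx
        simp [hk]
      · by_cases hxT : x ∈ T <;> simp [hx, hxT, List.mem_cons]
    rw [Finset.sum_congr rfl fun x _ => hsplit x, Finset.sum_add_distrib,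
      Finset.sum_ite_eq' Finset.univ k g]
    simp

lemma prodG [NeZero d] (hd : 2 ≤ d) (Γ : Matrix (Fin N) (Fin N) ℕ)
    (hdiag : ∀ i, Γ i i = 0) (α : Fin N → Fin d) :
    ∀ L : List (Fin N), L.Nodup →
    ((L.map fun i => gGen d N Γ i ^ ((α i : ℕ))).prod)
      = Mono (fun f l => f l + if l ∈ L then α l else 0)
          (fun f => omg d ^
            ((L.map fun i => (α i : ℕ) * ∑ j, Γ i j * ((f j : ℕ))).sum + crossL Γ α L))
  | [], _ => by
    simp only [List.map_nil, List.prod_nil, List.sum_nil, crossL]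
    rw [← Mono_one]
    exact Mono_congr (fun f l => by simp) (fun f => by simp)
  | i :: T, hnd => by
    have hiT : i ∉ T := (List.nodup_cons.mp hnd).1
    have hndT : T.Nodup := (List.nodup_cons.mp hnd).2
    rw [List.map_cons, List.prod_cons, prodG hd Γ hdiag α T hndT,
      gGen_pow hd Γ hdiag i ((α i : ℕ)), Mono_mul]
    apply Mono_congr
    · intro f l
      by_cases hl : l = i
      · subst hl
        simp [hiT, Fin.cast_val_eq_self]
      · by_cases hlT : l ∈ T <;>
          simp [Function.comp_apply, hl, hlT, List.mem_cons]
    · intro f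
      rw [← pow_add]
      apply omg_pow_congr (by omega : 0 < d)
      rw [List.map_cons, List.sum_cons, crossL]
      push_cast [fz_val]
      simp only [fz_add, apply_ite fz, fz_zero]
      have expand : (∑ x : Fin N, (Γ i x : ZMod d) * (fz (f x) + if x ∈ T then fz (α x) else 0))
          = (∑ x : Fin N, (Γ i x : ZMod d) * fz (f x))
            + ∑ x : Fin N, (if x ∈ T then (Γ i x : ZMod d) * fz (α x) else 0) := by
        rw [← Finset.sum_add_distrib]
        apply Finset.sum_congr rfl
        intro x _
        by_cases hx : x ∈ T <;> simp [hx] <;> ring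
      rw [expand, sum_ite_mem_list T hndT (fun k => ((Γ i k : ZMod d)) * fz (α k))]
      simp only [List.map_map]
      have hcomp : (Nat.cast ∘ fun k => Γ i k * ((α k : ℕ)) : Fin N → ZMod d)
          = (fun k => ((Γ i k : ZMod d)) * fz (α k)) := by
        funext k
        simp [Function.comp, fz_val]
      rw [hcomp]
      ring
lemma list_mul_sum (c : ℕ) (g : Fin N → ℕ) :
    ∀ T : List (Fin N), c * (T.map g).sum = (T.map fun x => c * g x).sum
  | [] => by simp
  | k :: T => by simp [List.map_cons, List.sum_cons, mul_add, list_mul_sum c g T]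

lemma crossL_eq (Γ : Matrix (Fin N) (Fin N) ℕ) (α : Fin N → Fin d) :
    ∀ L : List (Fin N), L.Pairwise (· < ·) →
    crossL Γ α L = ∑ p ∈ Finset.univ.filter
        (fun p : Fin N × Fin N => p.1 < p.2 ∧ p.1 ∈ L ∧ p.2 ∈ L),
      Γ p.1 p.2 * (α p.1 : ℕ) * (α p.2 : ℕ)
  | [], _ => by simp [crossL]
  | i :: T, hp => by
    have hi : ∀ k ∈ T, i < k := (List.pairwise_cons.mp hp).1
    have hpT := (List.pairwise_cons.mp hp).2
    have hiT : i ∉ T := fun h => lt_irrefl i (hi i h)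
    have hndT : T.Nodup := hpT.imp ne_of_lt
    rw [crossL, crossL_eq Γ α T hpT]
    have hsplit : Finset.univ.filter
          (fun p : Fin N × Fin N => p.1 < p.2 ∧ p.1 ∈ i :: T ∧ p.2 ∈ i :: T)
        = (T.toFinset.image fun k => (i, k)) ∪ Finset.univ.filter
            (fun p : Fin N × Fin N => p.1 < p.2 ∧ p.1 ∈ T ∧ p.2 ∈ T) := by
      ext p
      simp only [Finset.mem_filter, Finset.mem_univ, true_and, Finset.mem_union,
        Finset.mem_image, List.mem_toFinset, List.mem_cons]
      constructor
      · rintro ⟨hlt, h1, h2⟩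
        rcases h1 with h1 | h1
        · rcases h2 with h2 | h2
          · rw [h1, h2] at hlt
            exact absurd hlt (lt_irrefl _)
          · exact Or.inl ⟨p.2, h2, by rw [← h1]⟩
        · rcases h2 with h2 | h2
          · have := hi p.1 h1
            rw [h2] at hlt
            exact absurd (lt_trans this hlt) (lt_irrefl _)
          · exact Or.inr ⟨hlt, h1, h2⟩
      · rintro (⟨k, hk, rfl⟩ | ⟨hlt, h1, h2⟩)
        · exact ⟨hi k hk, Or.inl rfl, Or.inr hk⟩
        · exact ⟨hlt, Or.inr h1, Or.inr h2⟩
    have hdisj : Disjoint (T.toFinset.image fun k => (i, k))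
        (Finset.univ.filter (fun p : Fin N × Fin N => p.1 < p.2 ∧ p.1 ∈ T ∧ p.2 ∈ T)) := by
      rw [Finset.disjoint_left]
      rintro p hp1 hp2
      obtain ⟨k, _, rfl⟩ := Finset.mem_image.mp hp1
      exact hiT (Finset.mem_filter.mp hp2).2.2.1
    rw [hsplit, Finset.sum_union hdisj,
      Finset.sum_image (by intro a _ b _ h; exact (Prod.mk.injEq _ _ _ _ ▸ h).2)]
    congr 1
    have hTF : ∑ x ∈ T.toFinset, Γ (i, x).1 (i, x).2 * (α (i, x).1 : ℕ) * (α (i, x).2 : ℕ)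
        = ∑ x : Fin N, if x ∈ T then Γ i x * (α i : ℕ) * (α x : ℕ) else 0 := by
      rw [Finset.sum_congr rfl (fun x _ => rfl : ∀ x ∈ T.toFinset, _ = Γ i x * (α i : ℕ) * (α x : ℕ))]
      rw [← Finset.sum_filter]
      apply Finset.sum_congr _ fun x _ => rfl
      ext x
      simp [List.mem_toFinset]
    rw [hTF, sum_ite_mem_list T hndT (fun x => Γ i x * (α i : ℕ) * (α x : ℕ)),
      list_mul_sum (α i : ℕ) (fun k => Γ i k * (α k : ℕ)) T]
    have hfun : (fun x => (α i : ℕ) * (Γ i x * (α x : ℕ)))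
        = fun x => Γ i x * (α i : ℕ) * (α x : ℕ) := funext fun x => by ring
    rw [hfun]

lemma stabElem_apply [NeZero d] (hd : 2 ≤ d) (Γ : Matrix (Fin N) (Fin N) ℕ)
    (hdiag : ∀ i, Γ i i = 0) (α : Fin N → Fin d) (f f' : Fin N → Fin d) :
    stabElem d N Γ α f f' = (if f = fun l => f' l + α l then 1 else 0) *
      omg d ^ ((∑ i, (α i : ℕ) * ∑ j, Γ i j * ((f' j : ℕ)))
        + ∑ p ∈ Finset.univ.filter (fun p : Fin N × Fin N => p.1 < p.2),
            Γ p.1 p.2 * (α p.1 : ℕ) * (α p.2 : ℕ)) := by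
  rw [stabElem, prodG hd Γ hdiag α (List.finRange N) (List.nodup_finRange N)]
  simp only [Mono, Matrix.of_apply]
  have h1 : (fun l => f' l + if l ∈ List.finRange N then α l else 0) = fun l => f' l + α l := by
    funext l
    rw [if_pos (List.mem_finRange l)]
  have h2 : ((List.finRange N).map fun i => (α i : ℕ) * ∑ j, Γ i j * ((f' j : ℕ))).sum
      = ∑ i, (α i : ℕ) * ∑ j, Γ i j * ((f' j : ℕ)) := by
    rw [Fin.sum_univ_def]
  have h3 : crossL Γ α (List.finRange N)
      = ∑ p ∈ Finset.univ.filter (fun p : Fin N × Fin N => p.1 < p.2),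
          Γ p.1 p.2 * (α p.1 : ℕ) * (α p.2 : ℕ) := by
    rw [crossL_eq Γ α (List.finRange N) (List.pairwise_lt_finRange N)]
    apply Finset.sum_congr _ (fun p _ => rfl)
    apply Finset.filter_congr
    intro p _
    simp [List.mem_finRange]
  simp only [h1, h2, h3]

lemma sum_swap_lt {M : Type*} [AddCommMonoid M] (h : Fin N → Fin N → M) :
    ∑ p ∈ Finset.univ.filter (fun p : Fin N × Fin N => p.2 < p.1), h p.1 p.2
      = ∑ p ∈ Finset.univ.filter (fun p : Fin N × Fin N => p.1 < p.2), h p.2 p.1 := by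
  apply Finset.sum_equiv (Equiv.prodComm (Fin N) (Fin N))
  · intro p
    simp [Equiv.prodComm]
  · intro p _
    rfl

lemma sum_pairs {M : Type*} [AddCommMonoid M] (h : Fin N → Fin N → M)
    (hdiag0 : ∀ i, h i i = 0) :
    ∑ i, ∑ j, h i j
      = (∑ p ∈ Finset.univ.filter (fun p : Fin N × Fin N => p.1 < p.2), h p.1 p.2)
        + ∑ p ∈ Finset.univ.filter (fun p : Fin N × Fin N => p.1 < p.2), h p.2 p.1 := by
  rw [← Finset.sum_product' Finset.univ Finset.univ (fun i j => h i j), Finset.univ_product_univ]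
  rw [← Finset.sum_filter_add_sum_filter_not Finset.univ
      (fun p : Fin N × Fin N => p.1 < p.2) (fun p => h p.1 p.2)]
  congr 1
  rw [← Finset.sum_filter_add_sum_filter_not (Finset.univ.filter
      (fun p : Fin N × Fin N => ¬ p.1 < p.2)) (fun p => p.2 < p.1) (fun p => h p.1 p.2)]
  rw [Finset.filter_filter, Finset.filter_filter]
  have e1 : Finset.univ.filter (fun p : Fin N × Fin N => ¬ p.1 < p.2 ∧ p.2 < p.1)
      = Finset.univ.filter (fun p : Fin N × Fin N => p.2 < p.1) := by
    apply Finset.filter_congr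
    intro p _
    constructor
    · exact fun hh => hh.2
    · exact fun hh => ⟨fun hc => absurd (lt_trans hc hh) (lt_irrefl _), hh⟩
  have e2 : ∑ p ∈ Finset.univ.filter (fun p : Fin N × Fin N => ¬ p.1 < p.2 ∧ ¬ p.2 < p.1),
      h p.1 p.2 = 0 := by
    apply Finset.sum_eq_zero
    intro p hp
    have hc := (Finset.mem_filter.mp hp).2
    have : p.1 = p.2 := le_antisymm (not_lt.mp hc.2) (not_lt.mp hc.1)
    rw [← this, hdiag0]
  rw [e1, e2, add_zero, sum_swap_lt h]

lemma quad_congr {d : ℕ} (Γ : Matrix (Fin N) (Fin N) ℕ) (hsymm : Γ.IsSymm)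
    (hdiag : ∀ i, Γ i i = 0) (A A' : Fin N → ZMod d) :
    ∑ p ∈ Finset.univ.filter (fun p : Fin N × Fin N => p.1 < p.2),
        (Γ p.1 p.2 : ZMod d) * A p.1 * A p.2
      = ((∑ i, (A i - A' i) * ∑ j, (Γ i j : ZMod d) * A' j)
          + ∑ p ∈ Finset.univ.filter (fun p : Fin N × Fin N => p.1 < p.2),
              (Γ p.1 p.2 : ZMod d) * (A p.1 - A' p.1) * (A p.2 - A' p.2))
        + ∑ p ∈ Finset.univ.filter (fun p : Fin N × Fin N => p.1 < p.2),
            (Γ p.1 p.2 : ZMod d) * A' p.1 * A' p.2 := by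
  have h1 : ∑ i, (A i - A' i) * ∑ j, (Γ i j : ZMod d) * A' j
      = ∑ i, ∑ j, (A i - A' i) * ((Γ i j : ZMod d) * A' j) := by
    apply Finset.sum_congr rfl
    intro i _
    rw [Finset.mul_sum]
  rw [h1, sum_pairs (fun i j => (A i - A' i) * ((Γ i j : ZMod d) * A' j))
    (fun i => by show (A i - A' i) * ((Γ i i : ZMod d) * A' i) = 0; rw [hdiag]; simp)]
  rw [add_assoc, add_assoc, ← Finset.sum_add_distrib, ← Finset.sum_add_distrib,
    ← Finset.sum_add_distrib]
  apply Finset.sum_congr rfl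
  intro p _
  have hg : (Γ p.2 p.1 : ZMod d) = (Γ p.1 p.2 : ZMod d) := by rw [hsymm.apply]
  rw [hg]
  ring

lemma outer_psiG [NeZero d] (hd : 2 ≤ d) (Γ : Matrix (Fin N) (Fin N) ℕ)
    (hsymm : Γ.IsSymm) (hdiag : ∀ i, Γ i i = 0) (f f' : Fin N → Fin d) :
    outer d N (psiG d N Γ) f f' = ((d : ℂ) ^ N)⁻¹ *
      ∑ β : Fin N → Fin d, stabElem d N Γ β f f' := by
  have hd0 : 0 < d := by omega
  set β₀ : Fin N → Fin d := fun l => f l - f' l with hβ₀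
  have hcol : ∑ β : Fin N → Fin d, stabElem d N Γ β f f' = stabElem d N Γ β₀ f f' := by
    apply Finset.sum_eq_single_of_mem β₀ (Finset.mem_univ _)
    intro β _ hβ
    rw [stabElem_apply hd Γ hdiag, if_neg, zero_mul]
    intro heq
    apply hβ
    funext l
    have hl := congrFun heq l
    rw [hβ₀]
    simp only []
    rw [hl, add_sub_cancel_left]
  rw [hcol, stabElem_apply hd Γ hdiag]
  rw [if_pos (by funext l; rw [hβ₀]; simp only []; rw [add_comm, sub_add_cancel]), one_mul]
  -- unfold outer and psiG
  rw [outer, Matrix.of_apply, psiG]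
  set B : (Fin N → Fin d) → ℕ := fun g =>
    ∑ p ∈ Finset.univ.filter (fun p : Fin N × Fin N => p.1 < p.2),
      Γ p.1 p.2 * ((g p.1 : ℕ)) * ((g p.2 : ℕ)) with hB
  set E : ℕ := (∑ i, (β₀ i : ℕ) * ∑ j, Γ i j * ((f' j : ℕ))) +
    ∑ p ∈ Finset.univ.filter (fun p : Fin N × Fin N => p.1 < p.2),
      Γ p.1 p.2 * ((β₀ p.1 : ℕ)) * ((β₀ p.2 : ℕ)) with hE
  have hply : omg d ^ (B f) = omg d ^ (E + B f') := by
    apply omg_pow_congr hd0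
    rw [hE, hB]
    push_cast [fz_val]
    simp only [hβ₀, fz_sub]
    exact quad_congr Γ hsymm hdiag (fun l => fz (f l)) (fun l => fz (f' l))
  have hsq : ((Real.sqrt ((d : ℝ) ^ N) : ℂ))⁻¹ *
      (starRingEnd ℂ) ((Real.sqrt ((d : ℝ) ^ N) : ℂ))⁻¹ = ((d : ℂ) ^ N)⁻¹ := by
    rw [map_inv₀, Complex.conj_ofReal, ← mul_inv, ← Complex.ofReal_mul,
      Real.mul_self_sqrt (by positivity)]
    push_cast
    rfl
  calc (Real.sqrt ((d : ℝ) ^ N) : ℂ)⁻¹ * omg d ^ (B f) *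
        (starRingEnd ℂ) ((Real.sqrt ((d : ℝ) ^ N) : ℂ)⁻¹ * omg d ^ (B f'))
      = ((Real.sqrt ((d : ℝ) ^ N) : ℂ)⁻¹ * (starRingEnd ℂ) ((Real.sqrt ((d : ℝ) ^ N) : ℂ))⁻¹)
          * (omg d ^ (B f) * (starRingEnd ℂ) (omg d ^ (B f'))) := by
        rw [map_mul, map_inv₀]
        ring
    _ = ((d : ℂ) ^ N)⁻¹ * (omg d ^ E) := by
        rw [hsq, hply, pow_add]
        rw [mul_assoc, mul_comm (omg d ^ (B f')) ((starRingEnd ℂ) (omg d ^ (B f'))),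
          omg_conj, mul_one]
lemma glue_mem {d N : ℕ} {Q : Finset (Fin N)} (f : {x : Fin N // x ∉ Q} → Fin d)
    (h : {x : Fin N // x ∈ Q} → Fin d) {x : Fin N} (hx : x ∈ Q) :
    glue Q f h x = h ⟨x, hx⟩ := dif_pos hx

lemma glue_not_mem {d N : ℕ} {Q : Finset (Fin N)} (f : {x : Fin N // x ∉ Q} → Fin d)
    (h : {x : Fin N // x ∈ Q} → Fin d) {x : Fin N} (hx : x ∉ Q) :
    glue Q f h x = f ⟨x, hx⟩ := dif_neg hx

end Stab

/-- (Lemma 1) The graph state `ψ_G` is absolutely maximally entangled iff the partial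
trace over every subset `Q` of size `⌈N/2⌉` of every nontrivial stabilizer element
vanishes. -/
theorem psiG_AME_iff (d N : ℕ) (hd : 2 ≤ d) (Γ : Matrix (Fin N) (Fin N) ℕ)
    (hsymm : Γ.IsSymm) (hdiag : ∀ i, Γ i i = 0) :
    (∀ Q : Finset (Fin N), Q.card = (N + 1) / 2 →
        ptrace Q (outer d N (psiG d N Γ)) = ((d : ℂ) ^ (N / 2))⁻¹ • 1) ↔
      (∀ α : Fin N → Fin d, (∃ i, (α i : ℕ) ≠ 0) →
        ∀ Q : Finset (Fin N), Q.card = (N + 1) / 2 →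
          ptrace Q (stabElem d N Γ α) = 0) := by
  haveI : NeZero d := ⟨by omega⟩
  have hd0 : (0 : ℕ) < d := by omega
  have hdC : (d : ℂ) ≠ 0 := Nat.cast_ne_zero.mpr (by omega)
  constructor
  · rintro hAME α ⟨i₀, hi₀⟩ Q hQ
    have hi₀' : α i₀ ≠ 0 := fun hc => hi₀ (by rw [hc]; rfl)
    by_cases hQα : ∃ l, l ∈ Q ∧ α l ≠ 0
    · obtain ⟨l, hlQ, hl⟩ := hQα
      ext f f'
      show (∑ h : {x : Fin N // x ∈ Q} → Fin d,
        stabElem d N Γ α (glue Q f h) (glue Q f' h)) = 0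
      apply Finset.sum_eq_zero
      intro h _
      rw [stabElem_apply hd Γ hdiag, if_neg, zero_mul]
      intro heq
      have hcl := congrFun heq l
      rw [glue_mem f h hlQ, glue_mem f' h hlQ] at hcl
      exact hl (left_eq_add.mp hcl)
    · push_neg at hQα
      have hi₀Q : i₀ ∉ Q := fun hc => hi₀' (hQα i₀ hc)
      ext f f'
      show (∑ h : {x : Fin N // x ∈ Q} → Fin d,
        stabElem d N Γ α (glue Q f h) (glue Q f' h)) = 0
      by_cases hind : ∀ x : {x : Fin N // x ∉ Q}, f x = f' x + α x.val
      · -- use the AME hypothesis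
        have hne : f ≠ f' := by
          intro hc
          have h1 := hind ⟨i₀, hi₀Q⟩
          rw [hc] at h1
          exact hi₀' (left_eq_add.mp h1)
        have key : ∑ β : Fin N → Fin d, (∑ h : {x : Fin N // x ∈ Q} → Fin d,
              stabElem d N Γ β (glue Q f h) (glue Q f' h))
            = ∑ h : {x : Fin N // x ∈ Q} → Fin d,
                stabElem d N Γ α (glue Q f h) (glue Q f' h) := by
          apply Finset.sum_eq_single_of_mem α (Finset.mem_univ _)
          intro β _ hβ
          apply Finset.sum_eq_zero
          intro h _
          rw [stabElem_apply hd Γ hdiag, if_neg, zero_mul]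
          intro heq
          apply hβ
          funext x
          have hcx := congrFun heq x
          by_cases hx : x ∈ Q
          · rw [glue_mem f h hx, glue_mem f' h hx] at hcx
            rw [left_eq_add.mp hcx, hQα x hx]
          · rw [glue_not_mem f h hx, glue_not_mem f' h hx] at hcx
            have h2 := hind ⟨x, hx⟩
            rw [hcx] at h2
            exact add_left_cancel h2

        have hout : ptrace Q (outer d N (psiG d N Γ)) f f' = ((d : ℂ) ^ N)⁻¹ *
            ∑ h : {x : Fin N // x ∈ Q} → Fin d,
              stabElem d N Γ α (glue Q f h) (glue Q f' h) := by
          show (∑ h : {x : Fin N // x ∈ Q} → Fin d,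
            outer d N (psiG d N Γ) (glue Q f h) (glue Q f' h)) = _
          rw [Finset.sum_congr rfl fun h _ => outer_psiG hd Γ hsymm hdiag _ _,
            ← Finset.mul_sum, Finset.sum_comm, key]
        have hzero : ptrace Q (outer d N (psiG d N Γ)) f f' = 0 := by
          rw [hAME Q hQ]
          show ((d : ℂ) ^ (N / 2))⁻¹ • (1 : Matrix _ _ ℂ) f f' = 0
          rw [Matrix.one_apply_ne hne, smul_zero]
        rw [hzero] at hout
        have := hout.symm
        rcases mul_eq_zero.mp this with hc | hc
        · exact absurd hc (inv_ne_zero (pow_ne_zero _ hdC))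
        · exact hc
      · push_neg at hind
        obtain ⟨x, hx⟩ := hind
        apply Finset.sum_eq_zero
        intro h _
        rw [stabElem_apply hd Γ hdiag, if_neg, zero_mul]
        intro heq
        have hcx := congrFun heq x.val
        rw [glue_not_mem f h x.prop, glue_not_mem f' h x.prop] at hcx
        exact hx (by simpa using hcx)
  · intro hstab Q hQ
    ext f f'
    show (∑ h : {x : Fin N // x ∈ Q} → Fin d,
        outer d N (psiG d N Γ) (glue Q f h) (glue Q f' h))
      = (((d : ℂ) ^ (N / 2))⁻¹ • (1 : Matrix _ _ ℂ)) f f'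
    rw [Finset.sum_congr rfl fun h _ => outer_psiG hd Γ hsymm hdiag _ _,
      ← Finset.mul_sum, Finset.sum_comm]
    have hsplit : ∑ β : Fin N → Fin d, (∑ h : {x : Fin N // x ∈ Q} → Fin d,
          stabElem d N Γ β (glue Q f h) (glue Q f' h))
        = ∑ h : {x : Fin N // x ∈ Q} → Fin d,
            stabElem d N Γ 0 (glue Q f h) (glue Q f' h) := by
      apply Finset.sum_eq_single_of_mem 0 (Finset.mem_univ _)
      intro β _ hβ
      obtain ⟨i, hi⟩ : ∃ i, β i ≠ 0 := Function.ne_iff.mp hβ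
      have hstabβ := hstab β ⟨i, fun hc => hi (Fin.ext hc)⟩ Q hQ
      have := congrFun (congrFun hstabβ f) f'
      exact this
    rw [hsplit]
    have hterm : ∀ h : {x : Fin N // x ∈ Q} → Fin d,
        stabElem d N Γ 0 (glue Q f h) (glue Q f' h)
          = if f = f' then (1 : ℂ) else 0 := by
      intro h
      rw [stabElem_apply hd Γ hdiag]
      have hE : ((∑ i, ((0 : Fin N → Fin d) i : ℕ) * ∑ j, Γ i j * ((glue Q f' h j : ℕ)))
          + ∑ p ∈ Finset.univ.filter (fun p : Fin N × Fin N => p.1 < p.2),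
              Γ p.1 p.2 * (((0 : Fin N → Fin d) p.1 : ℕ)) * (((0 : Fin N → Fin d) p.2 : ℕ))) = 0 := by
        simp
      rw [hE, pow_zero, mul_one]
      have hcond : (glue Q f h = fun l => glue Q f' h l + (0 : Fin N → Fin d) l)
          ↔ f = f' := by
        constructor
        · intro heq
          funext x
          have hcx := congrFun heq x.val
          rw [glue_not_mem f h x.prop, glue_not_mem f' h x.prop] at hcx
          simpa using hcx
        · intro heq
          subst heq
          funext l
          show glue Q f h l = glue Q f h l + 0
          rw [add_zero]
      by_cases hff : f = f'
      · rw [if_pos (hcond.mpr hff), if_pos hff]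
      · rw [if_neg (fun hc => hff (hcond.mp hc)), if_neg hff]
    rw [Finset.sum_congr rfl fun h _ => hterm h]
    rw [Matrix.smul_apply, Matrix.one_apply]
    by_cases hff : f = f'
    · simp only [if_pos hff, smul_eq_mul, mul_one, Finset.sum_const, Finset.card_univ,
        nsmul_eq_mul, mul_one]
      have hcard : Fintype.card ({x : Fin N // x ∈ Q} → Fin d) = d ^ ((N + 1) / 2) := by
        rw [Fintype.card_fun, Fintype.card_fin, Fintype.card_coe, hQ]
      rw [hcard]
      have hN : N / 2 + (N + 1) / 2 = N := by omega
      have hpow : ((d : ℂ)) ^ N = (d : ℂ) ^ (N / 2) * (d : ℂ) ^ ((N + 1) / 2) := by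
        rw [← pow_add, hN]
      push_cast
      rw [hpow]
      have h1 : ((d : ℂ) ^ (N / 2)) ≠ 0 := pow_ne_zero _ hdC
      have h2 : ((d : ℂ) ^ ((N + 1) / 2)) ≠ 0 := pow_ne_zero _ hdC
      field_simp
    · simp [if_neg hff]
end
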